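/- Suppose K is adequate. For a finite family X₁, …, Xₙ of T0 spaces with product X = X₁ × ⋯ × Xₙ, the map γ : P_H(K(X)) → P_H(K(X₁)) × ⋯ × P_H(K(Xₙ)) defined by γ(A) = (p₁(A), …, pₙ(A)) is a homeomorphism; hence the K-reflection of the product is (up to homeomorphism) the product of the K-reflections: (X₁ × ⋯ × Xₙ)^k ≅ X₁^k × ⋯ × Xₙ^k. -/

import Mathlib

open Set Topology TopologicalSpace

universe u

/-- A nonempty subset `A` of a space `X` is a `K`-set if for every continuous map
`f : X → Y` to a `K`-space `Y` there is a unique `y : Y` with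
`closure (f '' A) = closure {y}`. -/
def IsKSet (K : (Y : Type u) → [inst : TopologicalSpace Y] → Prop)
    {X : Type u} [TopologicalSpace X] (A : Set X) : Prop :=
  A.Nonempty ∧ ∀ (Y : Type u) [TopologicalSpace Y], K Y →
    ∀ f : X → Y, Continuous f → ∃! y : Y, closure (f '' A) = closure ({y} : Set Y)

/-- `K(X)`: the set of closed `K`-sets of `X`. -/
def KSets (K : (Y : Type u) → [inst : TopologicalSpace Y] → Prop)
    (X : Type u) [TopologicalSpace X] : Set (Set X) :=
  {A : Set X | IsClosed A ∧ IsKSet K A}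

/-- The underlying type of `P_H(G)` for a family `G` of subsets of `X`. -/
structure PH {X : Type u} [TopologicalSpace X] (G : Set (Set X)) : Type u where
  toSet : Set X
  mem : toSet ∈ G

/-- `P_H(G)` carries the lower Vietoris topology, generated by the subbasic open sets
`♦U = {A ∈ G : A ∩ U ≠ ∅}` for `U` open in `X`. -/
instance {X : Type u} [TopologicalSpace X] (G : Set (Set X)) : TopologicalSpace (PH G) :=
  TopologicalSpace.generateFrom
    {V : Set (PH G) | ∃ U : Set X, IsOpen U ∧ V = {A : PH G | (A.toSet ∩ U).Nonempty}}

/-! ### Auxiliary lemmas -/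

lemma PH.ext' {X : Type u} [TopologicalSpace X] {G : Set (Set X)} {A B : PH G}
    (h : A.toSet = B.toSet) : A = B := by
  cases A; cases B; simpa using h

lemma diamond_isOpen {X : Type u} [TopologicalSpace X] (G : Set (Set X)) {U : Set X}
    (hU : IsOpen U) : IsOpen {A : PH G | (A.toSet ∩ U).Nonempty} :=
  TopologicalSpace.isOpen_generateFrom_of_mem ⟨U, hU, rfl⟩

lemma closure_inter_open_nonempty {X : Type u} [TopologicalSpace X] {U S : Set X}
    (hU : IsOpen U) : (closure S ∩ U).Nonempty ↔ (S ∩ U).Nonempty := by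
  constructor
  · rintro ⟨z, hzc, hzU⟩
    obtain ⟨w, hwU, hwS⟩ := mem_closure_iff.mp hzc U hU hzU
    exact ⟨w, hwS, hwU⟩
  · rintro ⟨z, h1, h2⟩
    exact ⟨z, subset_closure h1, h2⟩

lemma closure_singleton_inter_open {X : Type u} [TopologicalSpace X] {U : Set X}
    (hU : IsOpen U) (x : X) : (closure {x} ∩ U).Nonempty ↔ x ∈ U := by
  rw [closure_inter_open_nonempty hU, singleton_inter_nonempty]

lemma closure_singleton_eq_iff {Y : Type u} [TopologicalSpace Y] [T0Space Y] {a b : Y}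
    (h : closure ({a} : Set Y) = closure {b}) : a = b := by
  have h1 : a ⤳ b := specializes_iff_mem_closure.mpr (h.symm ▸ subset_closure rfl)
  have h2 : b ⤳ a := specializes_iff_mem_closure.mpr (h ▸ subset_closure rfl)
  exact (h1.antisymm h2).eq

section KLemmas

variable {K : (Y : Type u) → [inst : TopologicalSpace Y] → Prop}

/-- The image of a `K`-set under a continuous map is a `K`-set. -/
lemma isKSet_image {X Z : Type u} [TopologicalSpace X] [TopologicalSpace Z]
    {A : Set X} (hA : IsKSet K A) {g : X → Z} (hg : Continuous g) : IsKSet K (g '' A) := by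
  refine ⟨hA.1.image g, fun Y _ hY f hf => ?_⟩
  rw [← image_comp]
  exact hA.2 Y hY (f ∘ g) (hf.comp hg)

/-- The closure of a point is a closed `K`-set. -/
lemma closure_singleton_mem_KSets (hKT0 : ∀ (Y : Type u) [TopologicalSpace Y], K Y → T0Space Y)
    {X : Type u} [TopologicalSpace X] (x : X) : closure {x} ∈ KSets K X := by
  refine ⟨isClosed_closure, ⟨x, subset_closure rfl⟩, fun Y _ hY f hf => ?_⟩
  haveI := hKT0 Y hY
  have key : closure (f '' closure {x}) = closure ({f x} : Set Y) := by
    apply subset_antisymm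
    · apply closure_minimal _ isClosed_closure
      calc f '' closure {x} ⊆ closure (f '' {x}) := image_closure_subset_closure_image hf
      _ = closure {f x} := by rw [image_singleton]
    · apply closure_mono
      rintro _ rfl
      exact ⟨x, subset_closure rfl, rfl⟩
  exact ⟨f x, key, fun y' hy' => closure_singleton_eq_iff (hy'.symm.trans key)⟩

/-- The canonical map `x ↦ closure {x}` into `P_H(K(X))` is continuous. -/
lemma eta_continuous (hKT0 : ∀ (Y : Type u) [TopologicalSpace Y], K Y → T0Space Y)
    {X : Type u} [TopologicalSpace X] :
    Continuous (fun x : X => (⟨closure {x}, closure_singleton_mem_KSets hKT0 x⟩ :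
      PH (KSets K X))) := by
  rw [continuous_generateFrom_iff]
  rintro V ⟨U, hU, rfl⟩
  have : (fun x : X => (⟨closure {x}, closure_singleton_mem_KSets hKT0 x⟩ : PH (KSets K X))) ⁻¹'
      {A : PH (KSets K X) | (A.toSet ∩ U).Nonempty} = U := by
    ext x
    simp only [mem_preimage, mem_setOf_eq]
    exact closure_singleton_inter_open hU x
  rw [this]; exact hU

/-- Using adequacy: every closed `K`-set is irreducible. -/
lemma ksets_irreducible (hKT0 : ∀ (Y : Type u) [TopologicalSpace Y], K Y → T0Space Y)
    {X : Type u} [TopologicalSpace X] (hAdX : K (PH (KSets K X)))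
    {A : Set X} (hA : IsKSet K A) : IsIrreducible A := by
  set η : X → PH (KSets K X) :=
    fun x => ⟨closure {x}, closure_singleton_mem_KSets hKT0 x⟩ with hη
  obtain ⟨Bp, hBp, -⟩ := hA.2 (PH (KSets K X)) hAdX η (eta_continuous hKT0)
  -- `hBp : closure (η '' A) = closure {Bp}`
  have hmeets : ∀ W : Set X, IsOpen W → (A ∩ W).Nonempty → (Bp.toSet ∩ W).Nonempty := by
    intro W hW ⟨a, haA, haW⟩
    have h1 : η a ∈ closure ({Bp} : Set (PH (KSets K X))) :=
      hBp ▸ subset_closure (mem_image_of_mem η haA)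
    have h2 : η a ∈ {C : PH (KSets K X) | (C.toSet ∩ W).Nonempty} := by
      simp only [hη, mem_setOf_eq]
      exact (closure_singleton_inter_open hW a).mpr haW
    obtain ⟨C, hC1, hC2⟩ := mem_closure_iff.mp h1 _ (diamond_isOpen _ hW) h2
    rw [mem_singleton_iff] at hC2
    exact hC2 ▸ hC1
  refine ⟨hA.1, fun U V hU hV hAU hAV => ?_⟩
  have hBU : Bp ∈ {C : PH (KSets K X) | (C.toSet ∩ U).Nonempty} := hmeets U hU hAU
  have hBV : Bp ∈ {C : PH (KSets K X) | (C.toSet ∩ V).Nonempty} := hmeets V hV hAV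
  have hBcl : Bp ∈ closure (η '' A) := hBp.symm ▸ subset_closure rfl
  obtain ⟨C, ⟨hCU, hCV⟩, a, haA, rfl⟩ := mem_closure_iff.mp hBcl _
    ((diamond_isOpen _ hU).inter (diamond_isOpen _ hV)) ⟨hBU, hBV⟩
  simp only [hη, mem_setOf_eq] at hCU hCV
  exact ⟨a, haA, (closure_singleton_inter_open hU a).mp hCU,
    (closure_singleton_inter_open hV a).mp hCV⟩

/-- An irreducible closed subset of a product is the product of the closures of its
projections. -/
lemma irr_closed_pi_eq {ι : Type} {Xs : ι → Type u} [∀ i, TopologicalSpace (Xs i)]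
    {A : Set (∀ i, Xs i)} (hcl : IsClosed A) (hirr : IsIrreducible A) :
    A = Set.pi univ fun i => closure ((fun x => x i) '' A) := by
  apply subset_antisymm
  · intro a ha i _
    exact subset_closure (mem_image_of_mem _ ha)
  · intro x hx
    rw [← hcl.closure_eq]
    rw [mem_closure_iff]
    intro o ho hxo
    obtain ⟨I, u, hu, hsub⟩ := isOpen_pi_iff.mp ho x hxo
    have key : ∀ I' : Finset ι, (∀ i ∈ I', IsOpen (u i) ∧ x i ∈ u i) →
        (A ∩ ⋂ i ∈ I', (fun z : ∀ j, Xs j => z i) ⁻¹' u i).Nonempty := by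
      intro I'
      classical
      induction I' using Finset.induction_on with
      | empty => intro _; simpa using hirr.1
      | @insert j s hj ih =>
        intro h
        have hAj : (A ∩ (fun z : ∀ i, Xs i => z j) ⁻¹' u j).Nonempty := by
          have hxj : x j ∈ closure ((fun z : ∀ i, Xs i => z j) '' A) := hx j (mem_univ j)
          obtain ⟨w, hwu, a, haA, rfl⟩ :=
            mem_closure_iff.mp hxj (u j) (h j (Finset.mem_insert_self j s)).1
              (h j (Finset.mem_insert_self j s)).2
          exact ⟨a, haA, hwu⟩
        have hrest := ih (fun i hi => h i (Finset.mem_insert_of_mem hi))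
        have hopen : IsOpen (⋂ i ∈ s, (fun z : ∀ j, Xs j => z i) ⁻¹' u i) :=
          isOpen_biInter_finset fun i hi =>
            ((h i (Finset.mem_insert_of_mem hi)).1).preimage (continuous_apply i)
        have h3 := hirr.2 _ _ (((h j (Finset.mem_insert_self j s)).1).preimage
          (continuous_apply j)) hopen hAj hrest
        rw [Finset.set_biInter_insert]
        obtain ⟨z, hzA, hzj, hzs⟩ := h3
        exact ⟨z, hzA, hzj, hzs⟩
    obtain ⟨z, hzA, hzI⟩ := key I hu
    refine ⟨z, hsub fun i hi => ?_, hzA⟩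
    simp only [mem_iInter] at hzI
    exact hzI i hi

/-- The "cube": points that lie in `B i` for `i ∈ s` and agree with `x` elsewhere. -/
def cube {ι : Type} {Xs : ι → Type u} (B : ∀ i, Set (Xs i)) (s : Finset ι)
    (x : ∀ i, Xs i) : Set (∀ i, Xs i) :=
  {z | (∀ i ∈ s, z i ∈ B i) ∧ ∀ i ∉ s, z i = x i}

lemma cube_update_param {ι : Type} [DecidableEq ι] {Xs : ι → Type u} {B : ∀ i, Set (Xs i)}
    {s : Finset ι} {j : ι} (hj : j ∉ s) (x : ∀ i, Xs i) (b : Xs j) {z : ∀ i, Xs i} :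
    z ∈ cube B s (Function.update x j b) ↔
      ∃ w ∈ cube B s x, Function.update w j b = z := by
  constructor
  · intro ⟨h1, h2⟩
    refine ⟨Function.update z j (x j), ⟨fun i hi => ?_, fun i hi => ?_⟩, ?_⟩
    · rw [Function.update_of_ne (fun he : i = j => hj (he ▸ hi))]
      exact h1 i hi
    · by_cases he : i = j
      · subst he; rw [Function.update_self]
      · rw [Function.update_of_ne he]
        rw [h2 i hi, Function.update_of_ne he]
    · funext i
      by_cases he : i = j
      · subst he
        rw [Function.update_self, h2 i hj, Function.update_self]
      · rw [Function.update_of_ne he, Function.update_of_ne he]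
  · rintro ⟨w, ⟨h1, h2⟩, rfl⟩
    refine ⟨fun i hi => ?_, fun i hi => ?_⟩
    · rw [Function.update_of_ne (fun he : i = j => hj (he ▸ hi))]
      exact h1 i hi
    · by_cases he : i = j
      · subst he; rw [Function.update_self, Function.update_self]
      · rw [Function.update_of_ne he, Function.update_of_ne he]
        exact h2 i hi

lemma cube_insert_subset {ι : Type} [DecidableEq ι] {Xs : ι → Type u} {B : ∀ i, Set (Xs i)}
    {s : Finset ι} {j : ι} (hj : j ∉ s) (x : ∀ i, Xs i) {b : Xs j} (hb : b ∈ B j) :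
    cube B s (Function.update x j b) ⊆ cube B (insert j s) x := by
  rintro z ⟨h1, h2⟩
  refine ⟨fun i hi => ?_, fun i hi => ?_⟩
  · rcases Finset.mem_insert.mp hi with he | hi'
    · subst he
      rw [h2 i hj, Function.update_self]; exact hb
    · exact h1 i hi'
  · have hij : i ≠ j := fun he => hi (he ▸ Finset.mem_insert_self j s)
    have his : i ∉ s := fun h => hi (Finset.mem_insert_of_mem h)
    rw [h2 i his, Function.update_of_ne hij]

lemma mem_cube_insert {ι : Type} [DecidableEq ι] {Xs : ι → Type u} {B : ∀ i, Set (Xs i)}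
    {s : Finset ι} {j : ι} (hj : j ∉ s) (x : ∀ i, Xs i) {z : ∀ i, Xs i}
    (hz : z ∈ cube B (insert j s) x) :
    z ∈ cube B s (Function.update x j (z j)) ∧ z j ∈ B j := by
  obtain ⟨h1, h2⟩ := hz
  refine ⟨⟨fun i hi => h1 i (Finset.mem_insert_of_mem hi), fun i hi => ?_⟩,
    h1 j (Finset.mem_insert_self j s)⟩
  by_cases he : i = j
  · subst he; rw [Function.update_self]
  · rw [Function.update_of_ne he]
    exact h2 i (fun h => (Finset.mem_insert.mp h).elim he hi)

/-- The key induction: images of cubes have unique generic points. -/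
lemma cube_existsUnique (hKT0 : ∀ (Y : Type u) [TopologicalSpace Y], K Y → T0Space Y)
    {ι : Type} [DecidableEq ι] {Xs : ι → Type u} [∀ i, TopologicalSpace (Xs i)]
    {B : ∀ i, Set (Xs i)} (hB : ∀ i, IsKSet K (B i)) (s : Finset ι) :
    ∀ (x : ∀ i, Xs i) (Y : Type u) [TopologicalSpace Y], K Y →
      ∀ f : (∀ i, Xs i) → Y, Continuous f →
        ∃! y : Y, closure (f '' cube B s x) = closure ({y} : Set Y) := by
  induction s using Finset.induction_on with
  | empty =>
    intro x Y _ hY f hf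
    haveI := hKT0 Y hY
    have hcx : cube B ∅ x = {x} := by
      ext z
      simp only [cube, Finset.notMem_empty, mem_setOf_eq, mem_singleton_iff]
      constructor
      · intro ⟨_, h2⟩; funext i; exact h2 i (by simp)
      · rintro rfl; exact ⟨fun i hi => absurd hi (by simp), fun _ _ => rfl⟩
    rw [hcx, image_singleton]
    exact ⟨f x, rfl, fun y' hy' => closure_singleton_eq_iff hy'.symm⟩
  | @insert j s hj ih =>
    intro x Y _ hY f hf
    haveI := hKT0 Y hY
    have hex : ∀ b : Xs j,
        ∃ y : Y, closure (f '' cube B s (Function.update x j b)) = closure ({y} : Set Y) :=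
      fun b => (ih (Function.update x j b) Y hY f hf).exists
    choose g hg using hex
    have hgc : Continuous g := by
      rw [continuous_def]
      intro V hV
      have heq : g ⁻¹' V = ⋃ w ∈ cube B s x, {b | f (Function.update w j b) ∈ V} := by
        ext b
        simp only [mem_preimage, mem_iUnion, mem_setOf_eq]
        constructor
        · intro hbV
          have h1 : ((f '' cube B s (Function.update x j b)) ∩ V).Nonempty := by
            rw [← closure_inter_open_nonempty hV, hg b]
            exact ⟨g b, subset_closure rfl, hbV⟩
          obtain ⟨_, ⟨z, hz, rfl⟩, hfV⟩ := h1
          obtain ⟨w, hw, rfl⟩ := (cube_update_param hj x b).mp hz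
          exact ⟨w, hw, hfV⟩
        · rintro ⟨w, hw, hfV⟩
          have hz : Function.update w j b ∈ cube B s (Function.update x j b) :=
            (cube_update_param hj x b).mpr ⟨w, hw, rfl⟩
          have h1 : ((f '' cube B s (Function.update x j b)) ∩ V).Nonempty :=
            ⟨_, mem_image_of_mem f hz, hfV⟩
          rw [← closure_inter_open_nonempty hV, hg b] at h1
          exact (closure_singleton_inter_open hV (g b)).mp h1
      rw [heq]
      exact isOpen_biUnion fun w _ =>
        hV.preimage (hf.comp (continuous_const.update j continuous_id))
    obtain ⟨y, hy, hyuniq⟩ := (hB j).2 Y hY g hgc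
    have key : closure (f '' cube B (insert j s) x) = closure (g '' B j) := by
      apply subset_antisymm
      · apply closure_minimal _ isClosed_closure
        rintro _ ⟨z, hz, rfl⟩
        obtain ⟨hz1, hz2⟩ := mem_cube_insert hj x hz
        have : f z ∈ closure ({g (z j)} : Set Y) := by
          rw [← hg (z j)]
          exact subset_closure (mem_image_of_mem f hz1)
        exact closure_mono (singleton_subset_iff.mpr (mem_image_of_mem g hz2)) this
      · apply closure_minimal _ isClosed_closure
        rintro _ ⟨b, hb, rfl⟩
        have : g b ∈ closure (f '' cube B s (Function.update x j b)) := by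
          rw [hg b]; exact subset_closure rfl
        exact closure_mono (image_mono (f := f) (cube_insert_subset hj x hb)) this
    exact ⟨y, key.trans hy, fun y' hy' => hyuniq y' (key.symm.trans hy')⟩

/-- Products of `K`-sets are `K`-sets. -/
lemma isKSet_pi (hKT0 : ∀ (Y : Type u) [TopologicalSpace Y], K Y → T0Space Y)
    {ι : Type} [Fintype ι] [DecidableEq ι] {Xs : ι → Type u} [∀ i, TopologicalSpace (Xs i)]
    {B : ∀ i, Set (Xs i)} (hB : ∀ i, IsKSet K (B i)) : IsKSet K (Set.pi univ B) := by
  have hx : ∀ i, ∃ p, p ∈ B i := fun i => (hB i).1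
  choose x hx using hx
  have hcube : Set.pi univ B = cube B Finset.univ x := by
    ext z
    constructor
    · intro h
      exact ⟨fun i _ => h i (mem_univ i), fun i hi => absurd (Finset.mem_univ i) hi⟩
    · intro h i _
      exact h.1 i (Finset.mem_univ i)
  refine ⟨⟨x, fun i _ => hx i⟩, fun Y _ hY f hf => ?_⟩
  rw [hcube]
  exact cube_existsUnique hKT0 hB Finset.univ x Y hY f hf

end KLemmas

theorem PH_KSets_prod_homeomorph_prod_PH_KSets
    (K : (Y : Type u) → [inst : TopologicalSpace Y] → Prop)
    (hKT0 : ∀ (Y : Type u) [TopologicalSpace Y], K Y → T0Space Y)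
    (hKsob : ∀ (Y : Type u) [TopologicalSpace Y], T0Space Y → QuasiSober Y → K Y)
    (hAd : ∀ (Z : Type u) [TopologicalSpace Z], T0Space Z → K (PH (KSets K Z)))
    (n : ℕ) (Xs : Fin n → Type u)
    [∀ i, TopologicalSpace (Xs i)] [∀ i, T0Space (Xs i)] :
    ∃ γ : PH (KSets K (∀ i, Xs i)) ≃ₜ (∀ i, PH (KSets K (Xs i))),
      ∀ (A : PH (KSets K (∀ i, Xs i))) (i : Fin n),
        (γ A i).toSet = (fun x : ∀ j, Xs j => x i) '' A.toSet := by
  classical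
  -- images of a closed K-set of the product are closed K-sets
  have himg : ∀ (A : PH (KSets K (∀ i, Xs i))) (i : Fin n),
      (fun x : ∀ j, Xs j => x i) '' A.toSet ∈ KSets K (Xs i) := by
    intro A i
    have hirr : IsIrreducible A.toSet :=
      ksets_irreducible hKT0 (hAd (∀ i, Xs i) inferInstance) A.mem.2
    have hd := irr_closed_pi_eq A.mem.1 hirr
    have hne : (Set.pi univ fun i => closure ((fun x : ∀ j, Xs j => x i) '' A.toSet)).Nonempty :=
      hd ▸ A.mem.2.1
    have hclosed : (fun x : ∀ j, Xs j => x i) '' A.toSet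
        = closure ((fun x : ∀ j, Xs j => x i) '' A.toSet) := by
      conv_lhs => rw [hd]
      exact eval_image_univ_pi hne
    exact ⟨hclosed ▸ isClosed_closure, isKSet_image A.mem.2 (continuous_apply i)⟩
  have hpi : ∀ (Bf : ∀ i, PH (KSets K (Xs i))),
      (Set.pi univ fun i => (Bf i).toSet) ∈ KSets K (∀ i, Xs i) := by
    intro Bf
    exact ⟨isClosed_set_pi fun i _ => (Bf i).mem.1, isKSet_pi hKT0 fun i => (Bf i).mem.2⟩
  set F : PH (KSets K (∀ i, Xs i)) → ∀ i, PH (KSets K (Xs i)) :=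
    fun A i => ⟨(fun x : ∀ j, Xs j => x i) '' A.toSet, himg A i⟩ with hF
  set G : (∀ i, PH (KSets K (Xs i))) → PH (KSets K (∀ i, Xs i)) :=
    fun Bf => ⟨Set.pi univ fun i => (Bf i).toSet, hpi Bf⟩ with hG
  have hleft : ∀ A, G (F A) = A := by
    intro A
    apply PH.ext'
    have hirr : IsIrreducible A.toSet :=
      ksets_irreducible hKT0 (hAd (∀ i, Xs i) inferInstance) A.mem.2
    have hd := irr_closed_pi_eq A.mem.1 hirr
    have hne : (Set.pi univ fun i => closure ((fun x : ∀ j, Xs j => x i) '' A.toSet)).Nonempty :=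
      hd ▸ A.mem.2.1
    show (Set.pi univ fun i => (fun x : ∀ j, Xs j => x i) '' A.toSet) = A.toSet
    have : (fun i => (fun x : ∀ j, Xs j => x i) '' A.toSet)
        = fun i => closure ((fun x : ∀ j, Xs j => x i) '' A.toSet) := by
      funext i
      conv_lhs => rw [hd]
      exact eval_image_univ_pi hne
    rw [this, ← hd]
  have hright : ∀ Bf, F (G Bf) = Bf := by
    intro Bf
    funext i
    apply PH.ext'
    show (fun x : ∀ j, Xs j => x i) '' (Set.pi univ fun i => (Bf i).toSet) = (Bf i).toSet
    apply eval_image_univ_pi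
    exact ⟨fun i => ((Bf i).mem.2.1).choose, fun i _ => ((Bf i).mem.2.1).choose_spec⟩
  have hFc : Continuous F := by
    apply continuous_pi
    intro i
    rw [continuous_generateFrom_iff]
    rintro V ⟨U, hU, rfl⟩
    have : (fun A => F A i) ⁻¹' {C : PH (KSets K (Xs i)) | (C.toSet ∩ U).Nonempty}
        = {A : PH (KSets K (∀ i, Xs i)) |
            (A.toSet ∩ (fun x : ∀ j, Xs j => x i) ⁻¹' U).Nonempty} := by
      ext A
      simp only [mem_preimage, mem_setOf_eq, hF]
      constructor
      · rintro ⟨_, ⟨z, hz, rfl⟩, hU'⟩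
        exact ⟨z, hz, hU'⟩
      · rintro ⟨z, hz, hU'⟩
        exact ⟨z i, mem_image_of_mem _ hz, hU'⟩
    rw [this]
    exact diamond_isOpen _ (hU.preimage (continuous_apply i))
  have hGc : Continuous G := by
    rw [continuous_generateFrom_iff]
    rintro V ⟨U, hU, rfl⟩
    rw [isOpen_iff_forall_mem_open]
    intro Bf hBf
    simp only [mem_preimage, mem_setOf_eq, hG] at hBf
    obtain ⟨x, hxB, hxU⟩ := hBf
    obtain ⟨I, u, hu, hsub⟩ := isOpen_pi_iff.mp hU x hxU
    refine ⟨⋂ i ∈ I, (fun Bf' : ∀ j, PH (KSets K (Xs j)) => Bf' i) ⁻¹'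
      {C : PH (KSets K (Xs i)) | (C.toSet ∩ u i).Nonempty}, ?_, ?_, ?_⟩
    · intro Bf' hBf'
      simp only [mem_iInter, mem_preimage, mem_setOf_eq] at hBf'
      have hpt : ∀ i, ∃ p : Xs i, p ∈ (Bf' i).toSet ∧ (i ∈ I → p ∈ u i) := by
        intro i
        by_cases hi : i ∈ I
        · obtain ⟨p, hp1, hp2⟩ := hBf' i hi
          exact ⟨p, hp1, fun _ => hp2⟩
        · obtain ⟨p, hp⟩ := (Bf' i).mem.2.1
          exact ⟨p, hp, fun h => absurd h hi⟩
      choose x' hx'1 hx'2 using hpt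
      refine ⟨x', fun i _ => hx'1 i, hsub fun i hi => hx'2 i hi⟩
    · exact isOpen_biInter_finset fun i hi =>
        (diamond_isOpen _ (hu i hi).1).preimage (continuous_apply i)
    · simp only [mem_iInter, mem_preimage, mem_setOf_eq]
      intro i hi
      exact ⟨x i, hxB i trivial, (hu i hi).2⟩
  refine ⟨⟨⟨F, G, fun A => hleft A, fun Bf => hright Bf⟩, hFc, hGc⟩, fun A i => rfl⟩
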